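/- Let J and J' be nonnegative supermartingale families (indexed by stopping times) satisfying J = R(J' + ξ) and J' = R(J − ζ), where R denotes the Snell envelope family operator and ξ, ζ are admissible integrable families with ξ(T) = ζ(T) = 0. If J(0) < +∞ a.s., then Y := J − J' is well-defined and satisfies ξ(θ) ≤ Y(θ) ≤ ζ(θ) almost surely, for every stopping time θ. -/

import Mathlib

/-!
Since `J` is a supermartingale family, `∫_A J(θ) ≤ ∫_A J(0)` on every `F₀`-set `A`; taking
`A = {J(0) ≤ n}` shows `J(θ) < ∞` a.s. Then `J' + ξ ≤ J` forces `J'(θ) < ∞` as well, and the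
two domination inequalities, read in `ℝ`, are exactly `ξ ≤ J − J' ≤ ζ`.
-/

open MeasureTheory
open scoped ENNReal

variable {Ω : Type*} {mΩ : MeasurableSpace Ω}

/-- `J` is a (nonnegative, `ℝ≥0∞`-valued) supermartingale family indexed by
`[0,T]`-valued stopping times: for `θ' ≤ θ` and every `F_{θ'}`-measurable set `A`,
`∫_A J(θ) ≤ ∫_A J(θ')`. -/
def SupermartingaleFam {F : Filtration ℝ mΩ} {T : ℝ} (μ : Measure Ω)
    (J : {τ : Ω → ℝ // IsStoppingTime F (fun ω => (τ ω : WithTop ℝ)) ∧ ∀ ω, τ ω ∈ Set.Icc 0 T} → Ω → ℝ≥0∞) : Prop :=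
  (∀ θ, Measurable[θ.2.1.measurableSpace] (J θ)) ∧
  ∀ θ θ', θ'.1 ≤ θ.1 → ∀ A : Set Ω, MeasurableSet[θ'.2.1.measurableSpace] A →
    ∫⁻ ω in A, J θ ω ∂μ ≤ ∫⁻ ω in A, J θ' ω ∂μ

abbrev BoundedStoppingTime (F : Filtration ℝ mΩ) (T : ℝ) :=
  {τ : Ω → ℝ // IsStoppingTime F (fun ω => (τ ω : WithTop ℝ)) ∧ ∀ ω, τ ω ∈ Set.Icc 0 T}

theorem ae_lt_top_of_forall_setLIntegral_le {μ : Measure Ω} [IsFiniteMeasure μ]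
    {m : MeasurableSpace Ω} (hm : m ≤ mΩ) {f g : Ω → ℝ≥0∞} (hf : Measurable[m] f)
    (hg : AEMeasurable g μ)
    (hgf : ∀ A, MeasurableSet[m] A → ∫⁻ ω in A, g ω ∂μ ≤ ∫⁻ ω in A, f ω ∂μ)
    (hf_fin : ∀ᵐ ω ∂μ, f ω < ∞) : ∀ᵐ ω ∂μ, g ω < ∞ := by
  have h_level : ∀ n : ℕ, ∀ᵐ ω ∂μ, f ω ≤ n → g ω < ∞ := by
    intro n
    have hA : MeasurableSet[m] {ω | f ω ≤ n} := hf measurableSet_Iic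
    have h_int : ∫⁻ ω in {ω | f ω ≤ n}, g ω ∂μ < ∞ := calc
      ∫⁻ ω in {ω | f ω ≤ n}, g ω ∂μ ≤ ∫⁻ ω in {ω | f ω ≤ n}, f ω ∂μ := hgf _ hA
      _ ≤ ∫⁻ _ in {ω | f ω ≤ n}, (n : ℝ≥0∞) ∂μ :=
        setLIntegral_mono measurable_const fun _ hω => hω
      _ = n * μ {ω | f ω ≤ n} := setLIntegral_const _ _
      _ < ∞ := ENNReal.mul_lt_top (ENNReal.natCast_lt_top n) (measure_lt_top μ _)
    exact (ae_restrict_iff' (μ := μ) (hm _ hA)).mp (ae_lt_top' hg.restrict h_int.ne)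
  filter_upwards [hf_fin, ae_all_iff.mpr h_level] with ω hω h_level
  obtain ⟨n, hn⟩ := ENNReal.exists_nat_gt hω.ne
  exact h_level n hn.le

variable {F : Filtration ℝ mΩ} {T : ℝ}

theorem BoundedStoppingTime.measurableSpace_le (θ : BoundedStoppingTime F T) :
    θ.2.1.measurableSpace ≤ mΩ :=
  θ.2.1.measurableSpace_le_of_le fun ω => WithTop.coe_le_coe.mpr (θ.2.2 ω).2

theorem SupermartingaleFam.ae_lt_top {μ : Measure Ω} [IsFiniteMeasure μ]
    {J : BoundedStoppingTime F T → Ω → ℝ≥0∞} (hJ : SupermartingaleFam μ J)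
    {θ θ' : BoundedStoppingTime F T} (hθ : θ'.1 ≤ θ.1) (h_fin : ∀ᵐ ω ∂μ, J θ' ω < ∞) :
    ∀ᵐ ω ∂μ, J θ ω < ∞ :=
  ae_lt_top_of_forall_setLIntegral_le θ'.measurableSpace_le (hJ.1 θ')
    ((hJ.1 θ).mono θ.measurableSpace_le le_rfl).aemeasurable (hJ.2 θ θ' hθ) h_fin

theorem EReal.ne_top_of_coe_ennreal_add_le {a b : ℝ≥0∞} {x : ℝ} (ha : a ≠ ∞)
    (h : (b : EReal) + x ≤ a) : b ≠ ∞ := by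
  rintro rfl
  rw [EReal.coe_ennreal_top, EReal.top_add_of_ne_bot (EReal.coe_ne_bot x), top_le_iff] at h
  exact ha (EReal.coe_ennreal_eq_top_iff.mp h)

theorem EReal.toReal_add_le_of_coe_ennreal_add_le {a b : ℝ≥0∞} {x : ℝ} (ha : a ≠ ∞)
    (hb : b ≠ ∞) (h : (b : EReal) + x ≤ a) : b.toReal + x ≤ a.toReal := by
  rw [← EReal.coe_ennreal_toReal ha, ← EReal.coe_ennreal_toReal hb] at h
  exact_mod_cast h

theorem EReal.toReal_sub_le_of_coe_ennreal_sub_le {a b : ℝ≥0∞} {x : ℝ} (ha : a ≠ ∞)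
    (hb : b ≠ ∞) (h : (a : EReal) - x ≤ b) : a.toReal - x ≤ b.toReal := by
  rw [← EReal.coe_ennreal_toReal ha, ← EReal.coe_ennreal_toReal hb] at h
  exact_mod_cast h

theorem stmt_9_general {μ : Measure Ω} [IsProbabilityMeasure μ]
    {F : Filtration ℝ mΩ} {T : ℝ}
    (ξ ζ : {τ : Ω → ℝ // IsStoppingTime F (fun ω => (τ ω : WithTop ℝ)) ∧ ∀ ω, τ ω ∈ Set.Icc 0 T} → Ω → ℝ)
    (J J' : {τ : Ω → ℝ // IsStoppingTime F (fun ω => (τ ω : WithTop ℝ)) ∧ ∀ ω, τ ω ∈ Set.Icc 0 T} → Ω → ℝ≥0∞)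
    (θ0 : {τ : Ω → ℝ // IsStoppingTime F (fun ω => (τ ω : WithTop ℝ)) ∧ ∀ ω, τ ω ∈ Set.Icc 0 T})
    (hθ0 : θ0.1 = fun _ => 0)
    -- `J`, `J'` are supermartingale families
    (hJ : SupermartingaleFam μ J)
    -- `J` dominates `J' + ξ` and `J'` dominates `J − ζ`
    (hJdom : ∀ θ, ∀ᵐ ω ∂μ, (J' θ ω : EReal) + (ξ θ ω : EReal) ≤ (J θ ω : EReal))
    (hJ'dom : ∀ θ, ∀ᵐ ω ∂μ, (J θ ω : EReal) - (ζ θ ω : EReal) ≤ (J' θ ω : EReal))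
    -- `J(0) < +∞` a.s.
    (hJ0 : ∀ᵐ ω ∂μ, J θ0 ω < ⊤) :
    ∀ θ, ∀ᵐ ω ∂μ, J θ ω ≠ ⊤ ∧ J' θ ω ≠ ⊤ ∧
      ξ θ ω ≤ (J θ ω).toReal - (J' θ ω).toReal ∧
      (J θ ω).toReal - (J' θ ω).toReal ≤ ζ θ ω := by
  intro θ
  have h0θ : θ0.1 ≤ θ.1 := hθ0 ▸ fun ω => (θ.2.2 ω).1
  filter_upwards [hJ.ae_lt_top h0θ hJ0, hJdom θ, hJ'dom θ] with ω hJ_fin hlower hupper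
  have hJ'_fin := EReal.ne_top_of_coe_ennreal_add_le hJ_fin.ne hlower
  refine ⟨hJ_fin.ne, hJ'_fin, ?_, ?_⟩
  · linarith [EReal.toReal_add_le_of_coe_ennreal_add_le hJ_fin.ne hJ'_fin hlower]
  · linarith [EReal.toReal_sub_le_of_coe_ennreal_sub_le hJ_fin.ne hJ'_fin hupper]

/-- If `J = R(J' + ξ)` and `J' = R(J − ζ)` (Snell envelopes, i.e. smallest dominating
supermartingale families) with `ξ(T) = ζ(T) = 0` and `J(0) < ∞` a.s., then
`Y = J − J'` is well-defined (a.s. finite) and satisfies `ξ ≤ Y ≤ ζ`. -/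
theorem stmt_9 {μ : Measure Ω} [IsProbabilityMeasure μ]
    {F : Filtration ℝ mΩ} {T : ℝ} (hT : 0 ≤ T)
    (ξ ζ : {τ : Ω → ℝ // IsStoppingTime F (fun ω => (τ ω : WithTop ℝ)) ∧ ∀ ω, τ ω ∈ Set.Icc 0 T} → Ω → ℝ)
    (J J' : {τ : Ω → ℝ // IsStoppingTime F (fun ω => (τ ω : WithTop ℝ)) ∧ ∀ ω, τ ω ∈ Set.Icc 0 T} → Ω → ℝ≥0∞)
    (hξmeas : ∀ θ, StronglyMeasurable[θ.2.1.measurableSpace] (ξ θ))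
    (hζmeas : ∀ θ, StronglyMeasurable[θ.2.1.measurableSpace] (ζ θ))
    (hξint : ∀ θ, Integrable (ξ θ) μ) (hζint : ∀ θ, Integrable (ζ θ) μ)
    (θT θ0 : {τ : Ω → ℝ // IsStoppingTime F (fun ω => (τ ω : WithTop ℝ)) ∧ ∀ ω, τ ω ∈ Set.Icc 0 T})
    (hθT : θT.1 = fun _ => T) (hθ0 : θ0.1 = fun _ => 0)
    (hξT : ξ θT =ᵐ[μ] 0) (hζT : ζ θT =ᵐ[μ] 0)
    -- `J`, `J'` are supermartingale families
    (hJ : SupermartingaleFam μ J) (hJ' : SupermartingaleFam μ J')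
    -- `J` dominates `J' + ξ` and `J'` dominates `J − ζ`
    (hJdom : ∀ θ, ∀ᵐ ω ∂μ, (J' θ ω : EReal) + (ξ θ ω : EReal) ≤ (J θ ω : EReal))
    (hJ'dom : ∀ θ, ∀ᵐ ω ∂μ, (J θ ω : EReal) - (ζ θ ω : EReal) ≤ (J' θ ω : EReal))
    -- `J` and `J'` are the smallest such families (Snell envelope property)
    (hJmin : ∀ ψ, SupermartingaleFam μ ψ →
      (∀ θ, ∀ᵐ ω ∂μ, (J' θ ω : EReal) + (ξ θ ω : EReal) ≤ (ψ θ ω : EReal)) →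
      ∀ θ, ∀ᵐ ω ∂μ, J θ ω ≤ ψ θ ω)
    (hJ'min : ∀ ψ, SupermartingaleFam μ ψ →
      (∀ θ, ∀ᵐ ω ∂μ, (J θ ω : EReal) - (ζ θ ω : EReal) ≤ (ψ θ ω : EReal)) →
      ∀ θ, ∀ᵐ ω ∂μ, J' θ ω ≤ ψ θ ω)
    -- `J(0) < +∞` a.s.
    (hJ0 : ∀ᵐ ω ∂μ, J θ0 ω < ⊤) :
    ∀ θ, ∀ᵐ ω ∂μ, J θ ω ≠ ⊤ ∧ J' θ ω ≠ ⊤ ∧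
      ξ θ ω ≤ (J θ ω).toReal - (J' θ ω).toReal ∧
      (J θ ω).toReal - (J' θ ω).toReal ≤ ζ θ ω :=
  stmt_9_general ξ ζ J J' θ0 hθ0 hJ hJdom hJ'dom hJ0
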